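/- Let X be a compact Hausdorff space that is not scattered, K = ker(X) its perfect kernel, and A a closed subalgebra of C(X) separating points and containing constants. Let K̃ = ⋂{H clopen : χ_H ∈ A, K ⊆ H}. Then the Šilov boundary of A↾K̃ is contained in K; equivalently, K is a boundary for A↾K̃: for every f ∈ A, sup_{K̃}|f| = sup_K |f|. -/

import Mathlib

/-!
If some `x₀ ∈ K̃` had `‖f x₀‖ > sup_K ‖f‖`, then `g = conj (f x₀) • f ∈ A` has `Re g` below some
level `b₁` on `K` and `Re g x₀` above some `b₂ > b₁`. The compact set `{b₁ ≤ Re g ≤ b₂}` misses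
`K`, so it contains no perfect set, and then its image cannot be an interval. So `Re g` omits
some `b ∈ [b₁, b₂]`, and `{Re g < b}` is a clopen set containing `K` but not `x₀` whose indicator lies in `A`.

The indicator of `{Re h < b}` lies in `A` when `Re h` omits `b`: the line `Re z = b` is connected,
unbounded and disjoint from the range of `h`, so it misses the spectrum of `h` in `A` as well (the
extra part of that spectrum is a union of bounded components). The roots of
`(z - (b + t)) ^ n + (z - (b - t)) ^ n` lie on this line, so this polynomial in `h` is invertible in
`A`, and `(h - (b + t)) ^ n / ((h - (b + t)) ^ n + (h - (b - t)) ^ n)` converges uniformly to the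
indicator, since `‖z - (b - t)‖ < ‖z - (b + t)‖` exactly when `Re z < b`.
-/

open Classical Set

/-- `χ_H ∈ A`. -/
noncomputable def chiMem {X : Type*} [TopologicalSpace X]
    (A : Subalgebra ℂ C(X, ℂ)) (H : Set X) : Prop :=
  ∃ g ∈ A, ∀ x, g x = if x ∈ H then (1 : ℂ) else 0

open Filter Topology Polynomial

section PerfectSubset

variable {X Y : Type*} [TopologicalSpace X] [T2Space X] [TopologicalSpace Y] [T2Space Y]
  {φ : X → Y}

theorem mem_image_sInter_of_isChain (hφ : Continuous φ) {c : Set (Set X)}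
    (hc : IsChain (· ⊆ ·) c) (hcne : c.Nonempty) (hcpt : ∀ D ∈ c, IsCompact D) {q : Y}
    (hq : ∀ D ∈ c, q ∈ φ '' D) : q ∈ φ '' ⋂₀ c := by
  have : Nonempty c := hcne.to_subtype
  obtain ⟨y, hy⟩ := IsCompact.nonempty_iInter_of_directed_nonempty_isCompact_isClosed
    (fun D : c => (D : Set X) ∩ φ ⁻¹' {q})
    (fun D₁ D₂ => (hc.total D₁.2 D₂.2).elim
      (fun h => ⟨D₁, subset_rfl, inter_subset_inter_left _ h⟩)
      (fun h => ⟨D₂, inter_subset_inter_left _ h, subset_rfl⟩))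
    (fun D => by obtain ⟨y, hy, hyq⟩ := hq D D.2; exact ⟨y, hy, hyq⟩)
    (fun D => (hcpt D D.2).inter_right (isClosed_singleton.preimage hφ))
    (fun D => (hcpt D D.2).isClosed.inter (isClosed_singleton.preimage hφ))
  rw [mem_iInter] at hy
  exact ⟨y, mem_sInter.2 fun D hD => (hy ⟨D, hD⟩).1, (hy ⟨_, hcne.some_mem⟩).2⟩

/-- A compact set that is minimal among those whose image covers `Q` has no isolated point:
removing one would still leave `Q` covered, up to a point in the closure of the rest of `Q`. -/
theorem exists_perfect_subset_of_subset_image {C : Set X} (hC : IsCompact C)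
    (hφ : Continuous φ) {Q : Set Y} (hQ : Preperfect Q) (hQne : Q.Nonempty)
    (hQC : Q ⊆ φ '' C) : ∃ P ⊆ C, Perfect P ∧ P.Nonempty := by
  obtain ⟨D, hDC, hDmin⟩ := zorn_superset_nonempty {D | IsCompact D ∧ Q ⊆ φ '' D}
    (fun c hcS hc hcne => ⟨⋂₀ c,
      ⟨(hcS hcne.some_mem).1.of_isClosed_subset
          (isClosed_sInter fun D hD => (hcS hD).1.isClosed) (sInter_subset_of_mem hcne.some_mem),
        fun q hq => mem_image_sInter_of_isChain hφ hc hcne (fun D hD => (hcS hD).1)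
          fun D hD => (hcS hD).2 hq⟩,
      fun D hD => sInter_subset_of_mem hD⟩) C ⟨hC, hQC⟩
  obtain ⟨hDcpt, hQD⟩ := hDmin.prop
  refine ⟨D, hDC, ⟨hDcpt.isClosed, fun x hx => ?_⟩, ?_⟩
  · by_contra hiso
    simp only [accPt_iff_nhds, not_forall, not_exists, not_and, not_not] at hiso
    obtain ⟨U, hU, hUx⟩ := hiso
    obtain ⟨V, hVU, hVo, hxV⟩ := mem_nhds_iff.1 hU
    have hD'cpt : IsCompact (D \ V) := hDcpt.diff hVo
    have hQx : Q \ {φ x} ⊆ φ '' (D \ V) := by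
      rintro q ⟨hq, hqx⟩
      obtain ⟨y, hyD, rfl⟩ := hQD hq
      exact ⟨y, ⟨hyD, fun hyV => hqx (by rw [hUx y ⟨hVU hyV, hyD⟩]; rfl)⟩, rfl⟩
    have hQD' : Q ⊆ φ '' (D \ V) := by
      intro q hq
      by_cases hqx : q = φ x
      · subst hqx
        have hcl : φ x ∈ closure (Q \ {φ x}) :=
          mem_closure_iff_clusterPt.2 (accPt_principal_iff_clusterPt.1 (hQ _ hq))
        exact (hD'cpt.image hφ).isClosed.closure_subset (closure_mono hQx hcl)
      · exact hQx ⟨hq, hqx⟩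
    exact (hDmin.eq_of_subset ⟨hD'cpt, hQD'⟩ sdiff_subset ▸ hx).2 hxV
  · obtain ⟨q, hq⟩ := hQne
    obtain ⟨y, hy, -⟩ := hQD hq
    exact ⟨y, hy⟩

end PerfectSubset

theorem exists_mem_Icc_notMem_range {X : Type*} [TopologicalSpace X] [CompactSpace X]
    [T2Space X] {K : Set X} (hK : ∀ P : Set X, Perfect P → P ⊆ K) {φ : X → ℝ}
    (hφ : Continuous φ) {b₁ b₂ : ℝ} (hb : b₁ < b₂) (hKφ : ∀ x ∈ K, φ x < b₁) :
    ∃ b ∈ Icc b₁ b₂, b ∉ range φ := by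
  by_contra! hcov
  have hIcc : Icc b₁ b₂ ⊆ φ '' (φ ⁻¹' Icc b₁ b₂) := by
    intro q hq
    obtain ⟨x, rfl⟩ := hcov q hq
    exact ⟨x, hq, rfl⟩
  obtain ⟨P, hPC, hP, x, hxP⟩ := exists_perfect_subset_of_subset_image
    (isClosed_Icc.preimage hφ).isCompact hφ
    (isPreconnected_Icc.preperfect_of_nontrivial ⟨b₁, left_mem_Icc.2 hb.le, b₂,
      right_mem_Icc.2 hb.le, hb.ne⟩)
    (nonempty_Icc.2 hb.le) hIcc
  exact (hKφ x (hK P hP hxP)).not_ge (hPC hxP).1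

theorem isClopen_setOf_lt_of_forall_ne {X : Type*} [TopologicalSpace X] {φ : X → ℝ}
    (hφ : Continuous φ) {b : ℝ} (hb : ∀ x, φ x ≠ b) : IsClopen {x | φ x < b} := by
  refine ⟨?_, isOpen_lt hφ continuous_const⟩
  convert isClosed_le hφ continuous_const using 1
  ext x
  exact ⟨fun h : φ x < b => h.le, fun h : φ x ≤ b => h.lt_of_ne (hb x)⟩

theorem Subalgebra.disjoint_spectrum_of_isPreconnected {𝕜 𝔄 : Type*} [NormedField 𝕜]
    [NormedRing 𝔄] [NormedAlgebra 𝕜 𝔄] [CompleteSpace 𝔄] (S : Subalgebra 𝕜 𝔄)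
    [IsClosed (S : Set 𝔄)] (a : S) {L : Set 𝕜} (hL : IsPreconnected L)
    (hLb : ¬Bornology.IsBounded L) (hLa : Disjoint L (spectrum 𝕜 (a : 𝔄))) :
    Disjoint L (spectrum 𝕜 a) :=
  disjoint_left.2 fun _ hzL hz => hLb <|
    (Subalgebra.spectrum_isBounded_connectedComponentIn S a hz).subset
      (hL.subset_connectedComponentIn hzL hLa.subset_compl_right)

namespace Complex

theorem isPreconnected_setOf_re_eq (b : ℝ) : IsPreconnected {z : ℂ | z.re = b} :=
  ((convex_singleton b).linear_preimage reLm).isPreconnected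

theorem not_isBounded_setOf_re_eq (b : ℝ) : ¬Bornology.IsBounded {z : ℂ | z.re = b} :=
  fun hL => NormedSpace.unbounded_univ ℝ ℝ <|
    (imCLM.lipschitz.isBounded_image hL).subset fun y _ => ⟨⟨b, y⟩, rfl, rfl⟩

theorem sq_norm_sub_ofReal_add (z : ℂ) (b t : ℝ) :
    ‖z - ((b + t : ℝ) : ℂ)‖ ^ 2 + 4 * t * (z.re - b) = ‖z - ((b - t : ℝ) : ℂ)‖ ^ 2 := by
  simp only [← normSq_eq_norm_sq, normSq_apply, sub_re, sub_im, ofReal_re, ofReal_im]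
  ring

theorem norm_sub_ofReal_sub_lt_iff (z : ℂ) {b t : ℝ} (ht : 0 < t) :
    ‖z - ((b - t : ℝ) : ℂ)‖ < ‖z - ((b + t : ℝ) : ℂ)‖ ↔ z.re < b := by
  rw [← sq_lt_sq₀ (norm_nonneg _) (norm_nonneg _), ← sq_norm_sub_ofReal_add z b t]
  constructor <;> intro h <;> nlinarith

theorem re_eq_of_norm_sub_ofReal_eq {z : ℂ} {b t : ℝ} (ht : t ≠ 0)
    (h : ‖z - ((b + t : ℝ) : ℂ)‖ = ‖z - ((b - t : ℝ) : ℂ)‖) : z.re = b := by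
  have := sq_norm_sub_ofReal_add z b t
  rw [h, add_eq_left, mul_eq_zero, sub_eq_zero] at this
  exact this.resolve_left (by positivity)

theorem re_eq_of_sub_pow_add_sub_pow_eq_zero {z : ℂ} {b t : ℝ} (ht : t ≠ 0) {n : ℕ}
    (h : (z - ((b + t : ℝ) : ℂ)) ^ n + (z - ((b - t : ℝ) : ℂ)) ^ n = 0) : z.re = b := by
  rcases eq_or_ne n 0 with rfl | hn
  · norm_num at h
  refine re_eq_of_norm_sub_ofReal_eq ht ((pow_left_inj₀ (norm_nonneg _) (norm_nonneg _) hn).1 ?_)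
  rw [← norm_pow, ← norm_pow, eq_neg_of_add_eq_zero_left h, norm_neg]

end Complex

theorem isUnit_sub_pow_add_sub_pow {𝔅 : Type*} [NormedRing 𝔅] [NormedAlgebra ℂ 𝔅]
    [CompleteSpace 𝔅] [Nontrivial 𝔅] {a : 𝔅} {b t : ℝ} (ht : t ≠ 0)
    (ha : ∀ z ∈ spectrum ℂ a, z.re ≠ b) (n : ℕ) :
    IsUnit ((a - algebraMap ℂ 𝔅 (b + t : ℝ)) ^ n + (a - algebraMap ℂ 𝔅 (b - t : ℝ)) ^ n) := by
  by_contra hu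
  rw [← spectrum.zero_mem_iff ℂ] at hu
  have hp : (a - algebraMap ℂ 𝔅 (b + t : ℝ)) ^ n + (a - algebraMap ℂ 𝔅 (b - t : ℝ)) ^ n =
      aeval a ((X - C ((b + t : ℝ) : ℂ)) ^ n + (X - C ((b - t : ℝ) : ℂ)) ^ n) := by
    simp
  rw [hp, spectrum.map_polynomial_aeval] at hu
  obtain ⟨z, hz, hz0⟩ := hu
  exact ha z hz (Complex.re_eq_of_sub_pow_add_sub_pow_eq_zero ht (by simpa using hz0))

theorem norm_pow_div_pow_add_pow_le {𝕜 : Type*} [NormedField 𝕜] {u v : 𝕜} {r : ℝ}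
    (hr0 : 0 ≤ r) (hr1 : r < 1) (huv : ‖u‖ ≤ r * ‖v‖) {n : ℕ} (hn : n ≠ 0) :
    ‖u ^ n / (u ^ n + v ^ n)‖ ≤ r ^ n / (1 - r ^ n) := by
  have hrn : r ^ n < 1 := pow_lt_one₀ hr0 hr1 hn
  have hun : ‖u ^ n‖ ≤ r ^ n * ‖v ^ n‖ := by
    rw [norm_pow, norm_pow, ← mul_pow]
    exact pow_le_pow_left₀ (norm_nonneg u) huv n
  rcases eq_or_ne v 0 with rfl | hv
  · have : u = 0 := norm_le_zero_iff.1 (by simpa using huv)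
    simp [this, hn, div_nonneg (pow_nonneg hr0 n) (sub_nonneg.2 hrn.le)]
  have hvn : 0 < ‖v ^ n‖ := norm_pos_iff.2 (pow_ne_zero n hv)
  have hden : (1 - r ^ n) * ‖v ^ n‖ ≤ ‖u ^ n + v ^ n‖ := by
    have := norm_sub_norm_le (v ^ n) (-u ^ n)
    rw [norm_neg, sub_neg_eq_add, add_comm] at this
    linarith
  rw [norm_div, div_le_div_iff₀ (by nlinarith) (by linarith)]
  calc ‖u ^ n‖ * (1 - r ^ n) ≤ r ^ n * ‖v ^ n‖ * (1 - r ^ n) := by gcongr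
    _ ≤ r ^ n * ‖u ^ n + v ^ n‖ := by rw [mul_assoc, mul_comm ‖v ^ n‖]; gcongr

theorem norm_pow_div_pow_add_pow_sub_ite_le {𝕜 : Type*} [NormedField 𝕜] {u v : 𝕜} {r : ℝ}
    (hr0 : 0 ≤ r) (hr1 : r < 1) (huv : ‖u‖ ≤ r * ‖v‖ ∨ ‖v‖ ≤ r * ‖u‖) {n : ℕ} (hn : n ≠ 0) :
    ‖u ^ n / (u ^ n + v ^ n) - if ‖v‖ < ‖u‖ then 1 else 0‖ ≤ r ^ n / (1 - r ^ n) := by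
  split_ifs with hvu
  · have hvu' : ‖v‖ ≤ r * ‖u‖ :=
      huv.elim (fun h => by nlinarith [mul_nonneg (sub_nonneg.2 hr1.le) (norm_nonneg v)]) id
    have hsum : u ^ n + v ^ n ≠ 0 := by
      intro h0
      have : ‖u ^ n‖ = ‖v ^ n‖ := by rw [eq_neg_of_add_eq_zero_left h0, norm_neg]
      rw [norm_pow, norm_pow] at this
      exact (pow_lt_pow_left₀ hvu (norm_nonneg v) hn).ne' this
    have : u ^ n / (u ^ n + v ^ n) - 1 = -(v ^ n / (v ^ n + u ^ n)) := by
      rw [add_comm (v ^ n), div_sub_one hsum]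
      ring
    rw [this, norm_neg]
    exact norm_pow_div_pow_add_pow_le hr0 hr1 hvu' hn
  · have huv' : ‖u‖ ≤ r * ‖v‖ :=
      huv.elim id fun h => by nlinarith [mul_nonneg hr0 (norm_nonneg v), norm_nonneg u]
    rw [sub_zero]
    exact norm_pow_div_pow_add_pow_le hr0 hr1 huv' hn

theorem exists_lt_one_forall_le_mul_or_le_mul {X : Type*} [TopologicalSpace X]
    [CompactSpace X] [Nonempty X] {p q : X → ℝ} (hp : Continuous p)
    (hq : Continuous q) (hp0 : ∀ x, 0 < p x) (hq0 : ∀ x, 0 < q x) (hpq : ∀ x, p x ≠ q x) :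
    ∃ r, 0 ≤ r ∧ r < 1 ∧ ∀ x, p x ≤ r * q x ∨ q x ≤ r * p x := by
  set ψ : X → ℝ := fun x => min (p x / q x) (q x / p x)
  have hψ : Continuous ψ :=
    (hp.div hq fun x => (hq0 x).ne').min (hq.div hp fun x => (hp0 x).ne')
  obtain ⟨x₀, -, hx₀⟩ := isCompact_univ.exists_isMaxOn univ_nonempty hψ.continuousOn
  refine ⟨ψ x₀, le_min (div_nonneg (hp0 x₀).le (hq0 x₀).le) (div_nonneg (hq0 x₀).le (hp0 x₀).le),
    ?_, fun x => ?_⟩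
  · rcases (hpq x₀).lt_or_gt with h | h
    · exact min_lt_of_left_lt ((div_lt_one (hq0 x₀)).2 h)
    · exact min_lt_of_right_lt ((div_lt_one (hp0 x₀)).2 h)
  · rcases min_le_iff.1 (isMaxOn_iff.1 hx₀ x (mem_univ x)) with h | h
    · exact Or.inl ((div_le_iff₀ (hq0 x)).1 h)
    · exact Or.inr ((div_le_iff₀ (hp0 x)).1 h)

theorem tendsto_pow_div_one_sub_pow_atTop_nhds_zero {r : ℝ} (hr0 : 0 ≤ r) (hr1 : r < 1) :
    Tendsto (fun n : ℕ => r ^ n / (1 - r ^ n)) atTop (𝓝 0) := by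
  have hrn := tendsto_pow_atTop_nhds_zero_of_lt_one hr0 hr1
  have := hrn.div (tendsto_const_nhds.sub hrn) (by norm_num : (1 : ℝ) - 0 ≠ 0)
  rwa [sub_zero, zero_div] at this

section ClosedSubalgebra

variable {X : Type*} [TopologicalSpace X] [CompactSpace X] {A : Subalgebra ℂ C(X, ℂ)}

theorem notMem_spectrum_of_re_eq [IsClosed (A : Set C(X, ℂ))] (h : A) {b : ℝ}
    (hb : ∀ x, ((h : C(X, ℂ)) x).re ≠ b) {z : ℂ} (hz : z.re = b) : z ∉ spectrum ℂ h := by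
  refine (A.disjoint_spectrum_of_isPreconnected h (Complex.isPreconnected_setOf_re_eq b)
    (Complex.not_isBounded_setOf_re_eq b) ?_).notMem_of_mem_left hz
  rw [ContinuousMap.spectrum_eq_range, disjoint_left]
  rintro w hw ⟨x, rfl⟩
  exact hb x hw

theorem exists_mem_mul_sub_pow_add_sub_pow_eq [Nonempty X] (hA : IsClosed (A : Set C(X, ℂ)))
    {h : C(X, ℂ)} (hh : h ∈ A) {b t : ℝ} (ht : t ≠ 0) (hb : ∀ x, (h x).re ≠ b) (n : ℕ) :
    ∃ e ∈ A, ∀ x, e x * ((h x - ((b + t : ℝ) : ℂ)) ^ n + (h x - ((b - t : ℝ) : ℂ)) ^ n) =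
      (h x - ((b + t : ℝ) : ℂ)) ^ n := by
  have : CompleteSpace A := hA.completeSpace_coe
  set a : A := ⟨h, hh⟩
  obtain ⟨w, hw⟩ := (isUnit_sub_pow_add_sub_pow ht
    (fun z hz hzb => notMem_spectrum_of_re_eq a hb hzb hz) n).exists_left_inv
  refine ⟨((a - algebraMap ℂ A (b + t : ℝ)) ^ n * w : A), SetLike.coe_mem _, fun x => ?_⟩
  have := congrArg (fun y : A => (y : C(X, ℂ)) x) <|
    congrArg ((a - algebraMap ℂ A (b + t : ℝ)) ^ n * ·) hw
  simpa [mul_assoc, a] using this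

theorem exists_lt_one_forall_norm_sub_le_or [Nonempty X] (h : C(X, ℂ)) {b t : ℝ}
    (ht : ‖h‖ + |b| < t) (hb : ∀ x, (h x).re ≠ b) :
    ∃ r, 0 ≤ r ∧ r < 1 ∧ ∀ x,
      ‖h x - ((b + t : ℝ) : ℂ)‖ ≤ r * ‖h x - ((b - t : ℝ) : ℂ)‖ ∨
        ‖h x - ((b - t : ℝ) : ℂ)‖ ≤ r * ‖h x - ((b + t : ℝ) : ℂ)‖ := by
  have hsub : ∀ x (s : ℝ), ‖h‖ < |s| → 0 < ‖h x - s‖ := fun x s hs => norm_pos_iff.2 fun h0 => by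
    have := h.norm_coe_le_norm x
    rw [sub_eq_zero.1 h0, Complex.norm_real, Real.norm_eq_abs] at this
    linarith
  exact exists_lt_one_forall_le_mul_or_le_mul
    (continuous_norm.comp (h.continuous.sub continuous_const))
    (continuous_norm.comp (h.continuous.sub continuous_const))
    (fun x => hsub x _ (by linarith [le_abs_self (b + t), neg_abs_le b]))
    (fun x => hsub x _ (by linarith [neg_le_abs (b - t), le_abs_self b]))
    fun x huv => hb x (Complex.re_eq_of_norm_sub_ofReal_eq
      (by linarith [norm_nonneg h, abs_nonneg b] : 0 < t).ne' huv)

theorem chiMem_setOf_re_lt [Nonempty X] (hA : IsClosed (A : Set C(X, ℂ))) {h : C(X, ℂ)}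
    (hh : h ∈ A) {b : ℝ} (hb : ∀ x, (h x).re ≠ b) : chiMem A {x | (h x).re < b} := by
  set H := {x | (h x).re < b}
  have hH : IsClopen H :=
    isClopen_setOf_lt_of_forall_ne (Complex.continuous_re.comp h.continuous) hb
  set χ : C(X, ℂ) := ⟨H.indicator 1, hH.continuous_indicator continuous_const⟩
  refine ⟨χ, ?_, fun x => by simp [χ, indicator_apply]⟩
  set t : ℝ := ‖h‖ + |b| + 1
  have ht : 0 < t := by positivity
  set u : X → ℂ := fun x => h x - ((b + t : ℝ) : ℂ)
  set v : X → ℂ := fun x => h x - ((b - t : ℝ) : ℂ)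
  obtain ⟨r, hr0, hr1, hr⟩ := exists_lt_one_forall_norm_sub_le_or h (lt_add_one _) hb
  choose e heA he using exists_mem_mul_sub_pow_add_sub_pow_eq hA hh ht.ne' hb
  have hdist : ∀ n ≠ 0, ‖e n - χ‖ ≤ r ^ n / (1 - r ^ n) := fun n hn => by
    refine (ContinuousMap.norm_le _ (div_nonneg (pow_nonneg hr0 n)
      (sub_nonneg.2 (pow_lt_one₀ hr0 hr1 hn).le))).2 fun x => ?_
    have hsum : u x ^ n + v x ^ n ≠ 0 := fun h0 =>
      hb x (Complex.re_eq_of_sub_pow_add_sub_pow_eq_zero ht.ne' h0)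
    have hχ : χ x = if ‖v x‖ < ‖u x‖ then 1 else 0 := by
      simp only [χ, ContinuousMap.coe_mk, indicator_apply, Pi.one_apply, H, mem_ofPred_eq, u, v,
        Complex.norm_sub_ofReal_sub_lt_iff (h x) ht]
    rw [ContinuousMap.sub_apply, eq_div_of_mul_eq hsum (he n x), hχ]
    exact norm_pow_div_pow_add_pow_sub_ite_le hr0 hr1 (hr x) hn
  exact hA.mem_of_tendsto (tendsto_iff_norm_sub_tendsto_zero.2 <| squeeze_zero'
    (.of_forall fun n => norm_nonneg _) ((eventually_ne_atTop 0).mono hdist)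
    (tendsto_pow_div_one_sub_pow_atTop_nhds_zero hr0 hr1)) (.of_forall heA)

end ClosedSubalgebra

theorem norm_le_of_mem_sInter_isClopen {X : Type*} [TopologicalSpace X] [CompactSpace X]
    [T2Space X] {K : Set X} (hK : ∀ P : Set X, Perfect P → P ⊆ K) {A : Subalgebra ℂ C(X, ℂ)}
    (hA : IsClosed (A : Set C(X, ℂ))) {f : C(X, ℂ)} (hf : f ∈ A) {m : ℝ} (hm0 : 0 ≤ m)
    (hm : ∀ x ∈ K, ‖f x‖ ≤ m) {x₀ : X}
    (hx₀ : x₀ ∈ ⋂₀ {H : Set X | IsClopen H ∧ chiMem A H ∧ K ⊆ H}) : ‖f x₀‖ ≤ m := by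
  have : Nonempty X := ⟨x₀⟩
  by_contra! hlt
  set c := f x₀
  set g : C(X, ℂ) := starRingEnd ℂ c • f
  have hφ : Continuous fun x => (g x).re := Complex.continuous_re.comp g.continuous
  have hgK : ∀ x ∈ K, (g x).re ≤ ‖c‖ * m := fun x hx => by
    refine (Complex.re_le_norm (g x)).trans ?_
    simpa [g] using mul_le_mul_of_nonneg_left (hm x hx) (norm_nonneg c)
  have hgx₀ : (g x₀).re = ‖c‖ ^ 2 := by
    rw [ContinuousMap.smul_apply, smul_eq_mul, Complex.conj_mul']
    norm_cast
  have hmc : ‖c‖ * m < ‖c‖ ^ 2 := by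
    rw [sq]
    exact mul_lt_mul_of_pos_left hlt (hm0.trans_lt hlt)
  obtain ⟨b, ⟨hb₁, hb₂⟩, hbφ⟩ := exists_mem_Icc_notMem_range hK hφ
    (b₁ := (2 * (‖c‖ * m) + ‖c‖ ^ 2) / 3) (b₂ := (‖c‖ * m + 2 * ‖c‖ ^ 2) / 3) (by linarith)
    fun x hx => by linarith [hgK x hx]
  have hb : ∀ x, (g x).re ≠ b := fun x hx => hbφ ⟨x, hx⟩
  have hH : {x | (g x).re < b} ∈ {H : Set X | IsClopen H ∧ chiMem A H ∧ K ⊆ H} :=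
    ⟨isClopen_setOf_lt_of_forall_ne hφ hb, chiMem_setOf_re_lt hA (A.smul_mem hf _) hb,
      fun x hx => show (g x).re < b by linarith [hgK x hx]⟩
  have : (g x₀).re < b := mem_sInter.1 hx₀ _ hH
  linarith

theorem stmt9_general {X : Type*} [TopologicalSpace X] [CompactSpace X] [T2Space X]
    (K : Set X) (hKne : K.Nonempty)
    (hKmax : ∀ P : Set X, Perfect P → P ⊆ K)
    (A : Subalgebra ℂ C(X, ℂ))
    (hAcl : IsClosed (A : Set C(X, ℂ))) :
    ∀ f ∈ A,
      sSup ((fun x => ‖f x‖) '' ⋂₀ {H : Set X | IsClopen H ∧ chiMem A H ∧ K ⊆ H}) =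
        sSup ((fun x => ‖f x‖) '' K) := by
  intro f hf
  have hKsub : K ⊆ ⋂₀ {H : Set X | IsClopen H ∧ chiMem A H ∧ K ⊆ H} :=
    fun x hx => mem_sInter.2 fun H hH => hH.2.2 hx
  have hbdd : ∀ s : Set X, BddAbove ((fun x => ‖f x‖) '' s) :=
    fun s => ⟨‖f‖, forall_mem_image.2 fun x _ => f.norm_coe_le_norm x⟩
  have hm : ∀ x ∈ K, ‖f x‖ ≤ sSup ((fun x => ‖f x‖) '' K) :=
    fun x hx => le_csSup (hbdd K) (mem_image_of_mem _ hx)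
  refine le_antisymm (csSup_le ((hKne.mono hKsub).image _) (forall_mem_image.2 fun x hx => ?_))
    (csSup_le_csSup (hbdd _) (hKne.image _) (image_mono hKsub))
  exact norm_le_of_mem_sInter_isClopen hKmax hAcl hf
    ((norm_nonneg _).trans (hm _ hKne.some_mem)) hm hx

/-- Let `X` be compact Hausdorff and non-scattered, `K = ker X` its perfect kernel
(the largest perfect subset, here nonempty), and `A ≤ C(X, ℂ)` a closed subalgebra
separating points.  With `K̃ = ⋂ {H : H clopen, χ_H ∈ A, K ⊆ H}`, the set `K` is a
boundary for `A↾K̃`: for every `f ∈ A`, `sup_{K̃} |f| = sup_K |f|` — equivalently, the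
Šilov boundary of `A↾K̃` is contained in `K`. -/
theorem stmt9 {X : Type*} [TopologicalSpace X] [CompactSpace X] [T2Space X]
    (K : Set X) (hKperf : Perfect K) (hKne : K.Nonempty)
    (hKmax : ∀ P : Set X, Perfect P → P ⊆ K)
    (A : Subalgebra ℂ C(X, ℂ)) (hA : A.SeparatesPoints)
    (hAcl : IsClosed (A : Set C(X, ℂ))) :
    ∀ f ∈ A,
      sSup ((fun x => ‖f x‖) '' ⋂₀ {H : Set X | IsClopen H ∧ chiMem A H ∧ K ⊆ H}) =
        sSup ((fun x => ‖f x‖) '' K) :=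
  stmt9_general K hKne hKmax A hAcl
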